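/- arXiv:2202.09643 — 2 statements merged into one kernel-verified Lean document; each statement's English description precedes it below -/
import Mathlib

section
/- Let S be the polynomial ring over a field K in variables x_{ij}, (i,j) ∈ V, for a finite set V ⊂ ℕ², and let I be the ideal generated by the 2-minors x_{i1 j1} x_{i2 j2} − x_{i1 j2} x_{i2 j1} of all inner intervals of a polyomino P with vertex set V. In the localization S_x at the product x of all variables, the extended ideal I·S_x is generated by the 2-minors corresponding to the cells of P. -/
open MvPolynomial

/-- A cell of `ℕ²` is identified with its lower-left corner `a`; it is the
interval `[a, a+(1,1)]`. -/
abbrev Cell := ℕ × ℕ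

/-- Two cells are adjacent if they share an edge. -/
def CellAdj (c d : Cell) : Prop :=
  (c.1 = d.1 ∧ (c.2 + 1 = d.2 ∨ d.2 + 1 = c.2)) ∨
  (c.2 = d.2 ∧ (c.1 + 1 = d.1 ∨ d.1 + 1 = c.1))

/-- A polyomino: a nonempty finite collection of cells, any two of which are
connected by a path of edge-adjacent cells inside the collection. -/
def IsPolyomino (P : Finset Cell) : Prop :=
  P.Nonempty ∧ ∀ c ∈ P, ∀ d ∈ P,
    Relation.ReflTransGen (fun x y => x ∈ P ∧ y ∈ P ∧ CellAdj x y) c d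

/-- The four vertices of the cell with lower-left corner `c`. -/
def cellVertices (c : Cell) : Finset (ℕ × ℕ) :=
  {c, (c.1 + 1, c.2), (c.1, c.2 + 1), (c.1 + 1, c.2 + 1)}

/-- The vertex set `V(P)` of a collection of cells. -/
def vertexSet (P : Finset Cell) : Finset (ℕ × ℕ) :=
  P.biUnion cellVertices

/-- `[(i1,j1),(i2,j2)]` is an inner interval of `P`: it is a proper interval and
every cell contained in it belongs to `P`. -/
def IsInnerInterval (P : Finset Cell) (i1 j1 i2 j2 : ℕ) : Prop :=
  i1 < i2 ∧ j1 < j2 ∧ ∀ i j : ℕ, i1 ≤ i → i < i2 → j1 ≤ j → j < j2 → (i, j) ∈ P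

/-- The set of inner 2-minors of `P` in `S = K[x_v : v ∈ V(P)]`. -/
def innerMinors (K : Type*) [Field K] (P : Finset Cell) :
    Set (MvPolynomial {v : ℕ × ℕ // v ∈ vertexSet P} K) :=
  { f | ∃ i1 j1 i2 j2, IsInnerInterval P i1 j1 i2 j2 ∧
      ∃ (ha : (i1, j1) ∈ vertexSet P) (hb : (i2, j2) ∈ vertexSet P)
        (hc : (i1, j2) ∈ vertexSet P) (hd : (i2, j1) ∈ vertexSet P),
        f = X ⟨(i1, j1), ha⟩ * X ⟨(i2, j2), hb⟩ - X ⟨(i1, j2), hc⟩ * X ⟨(i2, j1), hd⟩ }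

/-- The 2-minors corresponding to the cells of `P`. -/
def cellMinors (K : Type*) [Field K] (P : Finset Cell) :
    Set (MvPolynomial {v : ℕ × ℕ // v ∈ vertexSet P} K) :=
  { f | ∃ c ∈ P,
      ∃ (ha : (c.1, c.2) ∈ vertexSet P) (hb : (c.1 + 1, c.2 + 1) ∈ vertexSet P)
        (hc : (c.1, c.2 + 1) ∈ vertexSet P) (hd : (c.1 + 1, c.2) ∈ vertexSet P),
        f = X ⟨(c.1, c.2), ha⟩ * X ⟨(c.1 + 1, c.2 + 1), hb⟩
          - X ⟨(c.1, c.2 + 1), hc⟩ * X ⟨(c.1 + 1, c.2), hd⟩ }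

/-!
After inverting all variables, the minor of an inner interval `[a, b]` can be cut along an
interior column `k` (or row `l`): multiplied by the unit `x_{k j₁}` it becomes a combination of
the minors of the two smaller inner intervals on either side of the cut. Cutting off one column
or row at a time reduces every inner minor to cell minors.
-/

section Minors

variable {R : Type*} [CommRing R] (x : ℕ × ℕ → R)

def minor (i₁ j₁ i₂ j₂ : ℕ) : R :=
  x (i₁, j₁) * x (i₂, j₂) - x (i₁, j₂) * x (i₂, j₁)

theorem map_minor {S : Type*} [CommRing S] (f : R →+* S) (i₁ j₁ i₂ j₂ : ℕ) :
    f (minor x i₁ j₁ i₂ j₂) = minor (f ∘ x) i₁ j₁ i₂ j₂ := by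
  simp only [minor, map_sub, map_mul, Function.comp_apply]

theorem mul_minor_eq_column_cut (i₁ j₁ k i₂ j₂ : ℕ) :
    x (k, j₁) * minor x i₁ j₁ i₂ j₂ =
      x (i₁, j₁) * minor x k j₁ i₂ j₂ + x (i₂, j₁) * minor x i₁ j₁ k j₂ := by
  simp only [minor]; ring

theorem mul_minor_eq_row_cut (i₁ j₁ i₂ l j₂ : ℕ) :
    x (i₁, l) * minor x i₁ j₁ i₂ j₂ =
      x (i₁, j₁) * minor x i₁ l i₂ j₂ + x (i₁, j₂) * minor x i₁ j₁ i₂ l := by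
  simp only [minor]; ring

variable {x} {I : Ideal R}

theorem minor_mem_of_column_cut {i₁ j₁ k i₂ j₂ : ℕ} (hu : IsUnit (x (k, j₁)))
    (h₁ : minor x i₁ j₁ k j₂ ∈ I) (h₂ : minor x k j₁ i₂ j₂ ∈ I) :
    minor x i₁ j₁ i₂ j₂ ∈ I := by
  rw [← Ideal.unit_mul_mem_iff_mem I hu, mul_minor_eq_column_cut x i₁ j₁ k i₂ j₂]
  exact I.add_mem (I.mul_mem_left _ h₂) (I.mul_mem_left _ h₁)

theorem minor_mem_of_row_cut {i₁ j₁ i₂ l j₂ : ℕ} (hu : IsUnit (x (i₁, l)))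
    (h₁ : minor x i₁ j₁ i₂ l ∈ I) (h₂ : minor x i₁ l i₂ j₂ ∈ I) :
    minor x i₁ j₁ i₂ j₂ ∈ I := by
  rw [← Ideal.unit_mul_mem_iff_mem I hu, mul_minor_eq_row_cut x i₁ j₁ i₂ l j₂]
  exact I.add_mem (I.mul_mem_left _ h₂) (I.mul_mem_left _ h₁)

end Minors

theorem mem_vertexSet_of_mem {P : Finset Cell} {c : Cell} (hc : c ∈ P) :
    c ∈ vertexSet P :=
  Finset.mem_biUnion.2 ⟨c, hc, by simp [cellVertices]⟩

theorem isInnerInterval_cell {P : Finset Cell} {c : Cell} (hc : c ∈ P) :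
    IsInnerInterval P c.1 c.2 (c.1 + 1) (c.2 + 1) := by
  refine ⟨lt_add_one _, lt_add_one _, fun i j hi₁ hi₂ hj₁ hj₂ => ?_⟩
  obtain rfl : i = c.1 := by omega
  obtain rfl : j = c.2 := by omega
  exact hc

section InnerMinors

variable {R : Type*} [CommRing R] {x : ℕ × ℕ → R} {I : Ideal R} {P : Finset Cell}

theorem minor_mem_of_column_strip (hunit : ∀ c ∈ P, IsUnit (x c))
    (hcell : ∀ c ∈ P, minor x c.1 c.2 (c.1 + 1) (c.2 + 1) ∈ I)
    {i j₁ j₂ : ℕ} (hj : j₁ < j₂) (hP : ∀ j, j₁ ≤ j → j < j₂ → (i, j) ∈ P) :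
    minor x i j₁ (i + 1) j₂ ∈ I := by
  induction j₂, hj using Nat.le_induction with
  | base => exact hcell (i, j₁) (hP j₁ le_rfl (lt_add_one _))
  | succ j₂ hj ih =>
    have hc : (i, j₂) ∈ P := hP j₂ (by omega) (lt_add_one _)
    exact minor_mem_of_row_cut (hunit _ hc)
      (ih fun j h₁ h₂ => hP j h₁ (by omega)) (hcell _ hc)

theorem minor_mem_of_isInnerInterval (hunit : ∀ c ∈ P, IsUnit (x c))
    (hcell : ∀ c ∈ P, minor x c.1 c.2 (c.1 + 1) (c.2 + 1) ∈ I)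
    {i₁ j₁ i₂ j₂ : ℕ} (h : IsInnerInterval P i₁ j₁ i₂ j₂) :
    minor x i₁ j₁ i₂ j₂ ∈ I := by
  obtain ⟨hi, hj, hP⟩ := h
  induction i₂, hi using Nat.le_induction with
  | base =>
    exact minor_mem_of_column_strip hunit hcell hj
      fun j h₁ h₂ => hP i₁ j le_rfl (lt_add_one _) h₁ h₂
  | succ i₂ hi ih =>
    have hc : (i₂, j₁) ∈ P := hP i₂ j₁ (by omega) (lt_add_one _) le_rfl hj
    exact minor_mem_of_column_cut (hunit _ hc)
      (ih fun i j h₁ h₂ => hP i j h₁ (by omega))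
      (minor_mem_of_column_strip hunit hcell hj
        fun j h₁ h₂ => hP i₂ j (by omega) (lt_add_one _) h₁ h₂)

end InnerMinors

noncomputable def vertexVar (K : Type*) [Field K] (P : Finset Cell) (v : ℕ × ℕ) :
    MvPolynomial {v : ℕ × ℕ // v ∈ vertexSet P} K :=
  if h : v ∈ vertexSet P then X ⟨v, h⟩ else 0

theorem minor_vertexVar {K : Type*} [Field K] {P : Finset Cell} {i₁ j₁ i₂ j₂ : ℕ}
    (ha : (i₁, j₁) ∈ vertexSet P) (hb : (i₂, j₂) ∈ vertexSet P)
    (hc : (i₁, j₂) ∈ vertexSet P) (hd : (i₂, j₁) ∈ vertexSet P) :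
    minor (vertexVar K P) i₁ j₁ i₂ j₂ =
      X ⟨(i₁, j₁), ha⟩ * X ⟨(i₂, j₂), hb⟩ - X ⟨(i₁, j₂), hc⟩ * X ⟨(i₂, j₁), hd⟩ := by
  simp only [minor, vertexVar, dif_pos ha, dif_pos hb, dif_pos hc, dif_pos hd]

theorem minor_vertexVar_mem_cellMinors {K : Type*} [Field K] {P : Finset Cell} {c : Cell}
    (hc : c ∈ P) : minor (vertexVar K P) c.1 c.2 (c.1 + 1) (c.2 + 1) ∈ cellMinors K P := by
  have hv : cellVertices c ⊆ vertexSet P := Finset.subset_biUnion_of_mem _ hc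
  have ha : (c.1, c.2) ∈ vertexSet P := hv (by simp [cellVertices])
  have hb : (c.1 + 1, c.2 + 1) ∈ vertexSet P := hv (by simp [cellVertices])
  have hc' : (c.1, c.2 + 1) ∈ vertexSet P := hv (by simp [cellVertices])
  have hd : (c.1 + 1, c.2) ∈ vertexSet P := hv (by simp [cellVertices])
  exact ⟨c, hc, ha, hb, hc', hd, minor_vertexVar ha hb hc' hd⟩

theorem stmt_8_general {K : Type*} [Field K] (P : Finset Cell) :
    Ideal.map
        (algebraMap (MvPolynomial {v : ℕ × ℕ // v ∈ vertexSet P} K)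
          (Localization.Away (∏ v : {v : ℕ × ℕ // v ∈ vertexSet P}, (X v : MvPolynomial _ K))))
        (Ideal.span (innerMinors K P)) =
      Ideal.span
        ((algebraMap (MvPolynomial {v : ℕ × ℕ // v ∈ vertexSet P} K)
          (Localization.Away (∏ v : {v : ℕ × ℕ // v ∈ vertexSet P}, (X v : MvPolynomial _ K)))) ''
          cellMinors K P) := by
  set φ := algebraMap (MvPolynomial {v : ℕ × ℕ // v ∈ vertexSet P} K)
    (Localization.Away (∏ v : {v : ℕ × ℕ // v ∈ vertexSet P}, (X v : MvPolynomial _ K)))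
  have hunit : ∀ c ∈ P, IsUnit ((φ ∘ vertexVar K P) c) := fun c hc => by
    simp only [Function.comp_apply, vertexVar, dif_pos (mem_vertexSet_of_mem hc)]
    exact IsLocalization.Away.isUnit_of_dvd _ (Finset.dvd_prod_of_mem _ (Finset.mem_univ _))
  have hcell : ∀ c ∈ P, minor (φ ∘ vertexVar K P) c.1 c.2 (c.1 + 1) (c.2 + 1) ∈
      Ideal.span (φ '' cellMinors K P) := fun c hc => by
    rw [← map_minor]
    exact Ideal.subset_span ⟨_, minor_vertexVar_mem_cellMinors hc, rfl⟩
  apply le_antisymm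
  · rw [Ideal.map_span, Ideal.span_le]
    rintro _ ⟨_, ⟨i₁, j₁, i₂, j₂, hI, ha, hb, hc, hd, rfl⟩, rfl⟩
    rw [← minor_vertexVar ha hb hc hd, map_minor]
    exact minor_mem_of_isInnerInterval hunit hcell hI
  · rw [Ideal.span_le]
    rintro _ ⟨_, ⟨c, hc, ha, hb, hc', hd, rfl⟩, rfl⟩
    exact Ideal.mem_map_of_mem _ <| Ideal.subset_span
      ⟨c.1, c.2, c.1 + 1, c.2 + 1, isInnerInterval_cell hc, ha, hb, hc', hd, rfl⟩

/-- In the localization of `S = K[x_v : v ∈ V(P)]` at the product of all variables,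
the extension of the polyomino ideal `I_P` is generated by the 2-minors of the
cells of `P`. -/
theorem stmt_8 {K : Type*} [Field K] (P : Finset Cell) (hP : IsPolyomino P) :
    Ideal.map
        (algebraMap (MvPolynomial {v : ℕ × ℕ // v ∈ vertexSet P} K)
          (Localization.Away (∏ v : {v : ℕ × ℕ // v ∈ vertexSet P}, (X v : MvPolynomial _ K))))
        (Ideal.span (innerMinors K P)) =
      Ideal.span
        ((algebraMap (MvPolynomial {v : ℕ × ℕ // v ∈ vertexSet P} K)
          (Localization.Away (∏ v : {v : ℕ × ℕ // v ∈ vertexSet P}, (X v : MvPolynomial _ K)))) ''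
          cellMinors K P) :=
  stmt_8_general P
end

section
/- Let P be a finite poset with d ≥ 2 elements and L = J(P) a simple distributive lattice (ρ_L(i) ≥ 2 for 1 ≤ i ≤ d−1). Suppose there exists 1 ≤ i0 ≤ d−1 with ρ_L(i0) ≥ 4 and ρ_L(i) = 2 for all other 1 ≤ i ≤ d−1, i ≠ i0. If P contains a subposet isomorphic to the disjoint union of two 3-element chains a1 < a2 < a3 and a4 < a5 < a6, then ρ_L(i0 − 1) ≥ 3 or ρ_L(i0 + 1) ≥ 3, yielding a contradiction; hence no such L exists containing such a subposet. -/
/-!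
Call an order ideal of cardinality `k` an ideal of rank `k`. Whenever `ρ(k) = 2`, two rank-`k`
ideals that both fail to contain a fixed ideal `X` of rank at most `k` coincide (the rank-`k`
ideal grown from `X` is the other one), and dually. Applied to three pairwise incomparable
ideals `X, Y, Z` with `|X| ≤ |Y| ≤ |Z|`, this forces `|Y| = i0`; if moreover `|X| < i0 < |Z|`,
the same uniqueness at ranks `i0 - 1` and `i0 + 1` produces rank-`i0` ideals `N ⊇ X` and
`M ⊆ Z` that are both relative complements of `Y` in one interval `[D, A]`, so `N = M` by
distributivity and `X ⊆ Z`. Hence two of any three pairwise incomparable ideals have rank `i0`.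

The two chains `a₀ < a₁ < a₂` and `a₃ < a₄ < a₅` give the antichains of ideals
`↓a₁, ↓{a₀, a₃}, ↓a₄` and `↓{a₂, a₃}, ↓{a₁, a₄}, ↓{a₀, a₅}`. So one of `↓a₁, ↓{a₀, a₃}` and
one of `↓{a₂, a₃}, ↓{a₁, a₄}` have rank `i0`, yet each of the former lies strictly inside each
of the latter.
-/

/-- The distributive lattice of order ideals (down-sets) of a finite poset `P`,
ordered by inclusion. -/
abbrev OrderIdeals (P : Type*) [PartialOrder P] := {S : Finset P // IsLowerSet (S : Set P)}

/-- `ρ_L(i)`: the number of elements of `L = J(P)` of rank `i`, the rank of an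
order ideal being its cardinality. -/
noncomputable def rho (P : Type*) [PartialOrder P] [Fintype P] [DecidableEq P] (i : ℕ) : ℕ :=
  Nat.card {I : OrderIdeals P // I.1.card = i}

section LowerSet

variable {P : Type*} [PartialOrder P] [DecidableEq P]

theorem exists_isLowerSet_erase_of_ssubset {X Y : Finset P} (hX : IsLowerSet (X : Set P))
    (hY : IsLowerSet (Y : Set P)) (hXY : X ⊂ Y) :
    ∃ m ∈ Y, X ⊆ Y.erase m ∧ IsLowerSet ((Y.erase m : Finset P) : Set P) := by
  obtain ⟨m, hm, hmax⟩ := Finset.exists_maximal (Finset.sdiff_nonempty.2 hXY.not_subset)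
  rw [Finset.mem_sdiff] at hm
  refine ⟨m, hm.1, fun x hx => Finset.mem_erase.2 ⟨by rintro rfl; exact hm.2 hx, hXY.subset hx⟩, ?_⟩
  rw [Finset.coe_erase]
  refine hY.erase fun b hb hmb => ?_
  -- `m` is maximal in `Y \ X` and `X` is a lower set, so `m` is maximal in `Y`.
  have hbX : b ∉ X := fun hbX => hm.2 (hX hmb hbX)
  exact (hmax (Finset.mem_sdiff.2 ⟨hb, hbX⟩) hmb).antisymm hmb

theorem exists_isLowerSet_card_eq_of_subset {X Y : Finset P} (hX : IsLowerSet (X : Set P))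
    (hY : IsLowerSet (Y : Set P)) (hXY : X ⊆ Y) {j : ℕ} (hXj : X.card ≤ j) (hjY : j ≤ Y.card) :
    ∃ Z : Finset P, IsLowerSet (Z : Set P) ∧ X ⊆ Z ∧ Z ⊆ Y ∧ Z.card = j := by
  induction Y using Finset.strongInduction with
  | _ Y ih =>
    obtain hjY | hjY := hjY.eq_or_lt
    · exact ⟨Y, hY, hXY, subset_rfl, hjY.symm⟩
    obtain ⟨m, hmY, hXm, hYm⟩ := exists_isLowerSet_erase_of_ssubset hX hY
      (hXY.ssubset_of_ne (by rintro rfl; omega))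
    have hcard : (Y.erase m).card = Y.card - 1 := Finset.card_erase_of_mem hmY
    obtain ⟨Z, hZ, hXZ, hZY, hZj⟩ := ih _ (Finset.erase_ssubset hmY) hYm hXm (by omega)
    exact ⟨Z, hZ, hXZ, hZY.trans (Finset.erase_subset m Y), hZj⟩

theorem exists_isLowerSet_subset_card_eq {Y : Finset P} (hY : IsLowerSet (Y : Set P)) {j : ℕ}
    (hjY : j ≤ Y.card) : ∃ Z : Finset P, IsLowerSet (Z : Set P) ∧ Z ⊆ Y ∧ Z.card = j := by
  obtain ⟨Z, hZ, -, hZY, hZj⟩ := exists_isLowerSet_card_eq_of_subset (by simp [isLowerSet_empty]) hY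
    (Finset.empty_subset Y) (by simp) hjY
  exact ⟨Z, hZ, hZY, hZj⟩

theorem exists_isLowerSet_superset_card_eq [Fintype P] {X : Finset P}
    (hX : IsLowerSet (X : Set P)) {j : ℕ} (hXj : X.card ≤ j) (hj : j ≤ Fintype.card P) :
    ∃ Z : Finset P, IsLowerSet (Z : Set P) ∧ X ⊆ Z ∧ Z.card = j := by
  obtain ⟨Z, hZ, hXZ, -, hZj⟩ := exists_isLowerSet_card_eq_of_subset hX (by simp [isLowerSet_univ])
    (Finset.subset_univ X) hXj (by simpa using hj)
  exact ⟨Z, hZ, hXZ, hZj⟩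

end LowerSet

theorem Finset.card_inter_lt_of_ne {α : Type*} [DecidableEq α] {S T : Finset α} (h : S ≠ T)
    (hST : S.card = T.card) : (S ∩ T).card < S.card := by
  refine Finset.card_lt_card (Finset.inter_subset_left.ssubset_of_ne ?_)
  intro hS
  exact h (Finset.eq_of_subset_of_card_le (hS ▸ Finset.inter_subset_right) hST.ge)

theorem Finset.card_pos_of_not_subset {α : Type*} {X Y : Finset α} (h : ¬ X ⊆ Y) :
    0 < X.card :=
  Finset.card_pos.2 (Finset.nonempty_of_ne_empty (by rintro rfl; exact h (Finset.empty_subset Y)))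

theorem Finset.card_lt_univ_of_not_subset {α : Type*} [Fintype α] {Y Z : Finset α}
    (h : ¬ Y ⊆ Z) : Z.card < Fintype.card α := by
  obtain ⟨x, -, hx⟩ := Finset.not_subset.1 h
  exact Finset.card_lt_univ_of_notMem hx

section Rank

variable {P : Type*} [PartialOrder P] [Fintype P] [DecidableEq P]

theorem eq_or_eq_or_eq_of_rho_eq_two {k : ℕ} (hk : rho P k = 2) {U V W : Finset P}
    (hU : IsLowerSet (U : Set P)) (hV : IsLowerSet (V : Set P)) (hW : IsLowerSet (W : Set P))
    (hUk : U.card = k) (hVk : V.card = k) (hWk : W.card = k) : U = V ∨ U = W ∨ V = W := by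
  by_contra! h
  let f : Fin 3 → {I : OrderIdeals P // I.1.card = k} :=
    ![⟨⟨U, hU⟩, hUk⟩, ⟨⟨V, hV⟩, hVk⟩, ⟨⟨W, hW⟩, hWk⟩]
  have hf : Function.Injective f := by
    intro i j hij
    have hij' := congrArg (fun I => I.1.1) hij
    fin_cases i <;> fin_cases j <;> simp_all [f, eq_comm]
  have := Nat.card_le_card_of_injective f hf
  simp [rho] at hk this
  omega

theorem eq_of_not_superset_of_rho_eq_two {k : ℕ} (hk : rho P k = 2) {X U V : Finset P}
    (hX : IsLowerSet (X : Set P)) (hXk : X.card ≤ k) (hU : IsLowerSet (U : Set P))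
    (hV : IsLowerSet (V : Set P)) (hUk : U.card = k) (hVk : V.card = k) (hXU : ¬ X ⊆ U)
    (hXV : ¬ X ⊆ V) : U = V := by
  have hkP : k ≤ Fintype.card P := hUk ▸ Finset.card_le_univ U
  obtain ⟨C, hC, hXC, hCk⟩ := exists_isLowerSet_superset_card_eq hX hXk hkP
  rcases eq_or_eq_or_eq_of_rho_eq_two hk hC hU hV hCk hUk hVk with rfl | rfl | h
  exacts [absurd hXC hXU, absurd hXC hXV, h]

theorem eq_of_not_subset_of_rho_eq_two {k : ℕ} (hk : rho P k = 2) {Z U V : Finset P}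
    (hZ : IsLowerSet (Z : Set P)) (hkZ : k ≤ Z.card) (hU : IsLowerSet (U : Set P))
    (hV : IsLowerSet (V : Set P)) (hUk : U.card = k) (hVk : V.card = k) (hUZ : ¬ U ⊆ Z)
    (hVZ : ¬ V ⊆ Z) : U = V := by
  obtain ⟨T, hT, hTZ, hTk⟩ := exists_isLowerSet_subset_card_eq hZ hkZ
  rcases eq_or_eq_or_eq_of_rho_eq_two hk hT hU hV hTk hUk hVk with rfl | rfl | h
  exacts [absurd hTZ hUZ, absurd hTZ hVZ, h]

theorem rho_card_ne_two_of_not_subset {X Y Z : Finset P} (hX : IsLowerSet (X : Set P))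
    (hY : IsLowerSet (Y : Set P)) (hZ : IsLowerSet (Z : Set P)) (hXY : ¬ X ⊆ Y)
    (hYZ : ¬ Y ⊆ Z) (hXZ : ¬ X ⊆ Z) (hXY' : X.card ≤ Y.card) (hYZ' : Y.card ≤ Z.card) :
    rho P Y.card ≠ 2 := by
  intro hk
  obtain ⟨T, hT, hTZ, hTk⟩ := exists_isLowerSet_subset_card_eq hZ hYZ'
  have hYT := eq_of_not_superset_of_rho_eq_two hk hX hXY' hY hT rfl hTk hXY
    fun hXT => hXZ (hXT.trans hTZ)
  exact hYZ (hYT ▸ hTZ)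

theorem exists_isLowerSet_subset_inter_of_rho_eq_two {k : ℕ} (hk : rho P k = 2)
    {X Y Z : Finset P} (hX : IsLowerSet (X : Set P)) (hY : IsLowerSet (Y : Set P))
    (hZ : IsLowerSet (Z : Set P)) (hXk : X.card ≤ k) (hkY : k ≤ Y.card) (hkZ : k ≤ Z.card)
    (hXY : ¬ X ⊆ Y) (hXZ : ¬ X ⊆ Z) :
    ∃ D : Finset P, IsLowerSet (D : Set P) ∧ D ⊆ Y ∧ D ⊆ Z ∧ D.card = k := by
  obtain ⟨D, hD, hDY, hDk⟩ := exists_isLowerSet_subset_card_eq hY hkY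
  obtain ⟨D', hD', hD'Z, hD'k⟩ := exists_isLowerSet_subset_card_eq hZ hkZ
  have hDD' := eq_of_not_superset_of_rho_eq_two hk hX hXk hD hD' hDk hD'k
    (fun h => hXY (h.trans hDY)) (fun h => hXZ (h.trans hD'Z))
  exact ⟨D, hD, hDY, hDD' ▸ hD'Z, hDk⟩

theorem exists_isLowerSet_union_subset_of_rho_eq_two {k : ℕ} (hk : rho P k = 2)
    {X Y Z : Finset P} (hX : IsLowerSet (X : Set P)) (hY : IsLowerSet (Y : Set P))
    (hZ : IsLowerSet (Z : Set P)) (hXk : X.card ≤ k) (hYk : Y.card ≤ k) (hkZ : k ≤ Z.card)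
    (hXZ : ¬ X ⊆ Z) (hYZ : ¬ Y ⊆ Z) :
    ∃ A : Finset P, IsLowerSet (A : Set P) ∧ X ⊆ A ∧ Y ⊆ A ∧ A.card = k := by
  have hkP : k ≤ Fintype.card P := hkZ.trans (Finset.card_le_univ Z)
  obtain ⟨A, hA, hXA, hAk⟩ := exists_isLowerSet_superset_card_eq hX hXk hkP
  obtain ⟨A', hA', hYA', hA'k⟩ := exists_isLowerSet_superset_card_eq hY hYk hkP
  have hAA' := eq_of_not_subset_of_rho_eq_two hk hZ hkZ hA hA' hAk hA'k
    (fun h => hXZ (hXA.trans h)) (fun h => hYZ (hYA'.trans h))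
  exact ⟨A, hA, hXA, hAA' ▸ hYA', hAk⟩

theorem false_of_rho_eq_two_of_rho_add_two_eq_two {k : ℕ} (hk : rho P k = 2)
    (hk2 : rho P (k + 2) = 2) {X Y Z : Finset P} (hX : IsLowerSet (X : Set P))
    (hY : IsLowerSet (Y : Set P)) (hZ : IsLowerSet (Z : Set P)) (hXk : X.card ≤ k)
    (hYk : Y.card = k + 1) (hkZ : k + 2 ≤ Z.card) (hXY : ¬ X ⊆ Y) (hYZ : ¬ Y ⊆ Z)
    (hXZ : ¬ X ⊆ Z) : False := by
  obtain ⟨D, hD, hDY, hDZ, hDk⟩ := exists_isLowerSet_subset_inter_of_rho_eq_two hk hX hY hZ hXk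
    (by omega) (by omega) hXY hXZ
  obtain ⟨A, hA, hXA, hYA, hAk⟩ := exists_isLowerSet_union_subset_of_rho_eq_two hk2 hX hY hZ
    (by omega) (by omega) hkZ hXZ hYZ
  obtain ⟨N, hN, hXN, hNA, hNk⟩ :=
    exists_isLowerSet_card_eq_of_subset hX hA hXA (j := k + 1) (by omega) (by omega)
  obtain ⟨M, hM, hDM, hMZ, hMk⟩ :=
    exists_isLowerSet_card_eq_of_subset hD hZ hDZ (j := k + 1) (by omega) (by omega)
  have hYN := Finset.card_union_add_card_inter Y N
  have hYM := Finset.card_union_add_card_inter Y M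
  have hYN_lt := Finset.card_inter_lt_of_ne (by rintro rfl; exact hXY hXN) (hYk.trans hNk.symm)
  have hYM_lt := Finset.card_inter_lt_of_ne (by rintro rfl; exact hYZ hMZ) (hYk.trans hMk.symm)
  have hYN_le : (Y ∪ N).card ≤ k + 2 := hAk ▸ Finset.card_le_card (Finset.union_subset hYA hNA)
  have hYND : Y ∩ N = D :=
    eq_of_not_superset_of_rho_eq_two hk hX hXk (by push_cast; exact hY.inter hN) hD
      (by omega) hDk (fun h => hXY (h.trans Finset.inter_subset_left)) (fun h => hXY (h.trans hDY))
  have hYNA : Y ∪ N = A :=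
    Finset.eq_of_subset_of_card_le (Finset.union_subset hYA hNA) (by omega)
  have hYMD : Y ∩ M = D :=
    (Finset.eq_of_subset_of_card_le (Finset.subset_inter hDY hDM) (by omega)).symm
  have hYMA : Y ∪ M = A :=
    eq_of_not_subset_of_rho_eq_two hk2 hZ hkZ (by push_cast; exact hY.union hM) hA
      (by rw [hYMD, hDk] at hYM; omega) hAk (fun h => hYZ (Finset.subset_union_left.trans h))
      (fun h => hYZ (hYA.trans h))
  -- In a distributive lattice relative complements are unique.
  have hNM : N = M := eq_of_inf_eq_sup_eq (a := Y)
    (by rw [inf_comm, inf_comm M]; exact hYND.trans hYMD.symm)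
    (by rw [sup_comm, sup_comm M]; exact hYNA.trans hYMA.symm)
  exact hXZ (hXN.trans (hNM ▸ hMZ))

theorem card_eq_of_card_le_of_card_le {i0 : ℕ}
    (h2 : ∀ i, 1 ≤ i → i ≤ Fintype.card P - 1 → i ≠ i0 → rho P i = 2) {X Y Z : Finset P}
    (hX : IsLowerSet (X : Set P)) (hY : IsLowerSet (Y : Set P)) (hZ : IsLowerSet (Z : Set P))
    (hXY : ¬ X ⊆ Y) (hYZ : ¬ Y ⊆ Z) (hXZ : ¬ X ⊆ Z) (hXY' : X.card ≤ Y.card)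
    (hYZ' : Y.card ≤ Z.card) : Y.card = i0 ∧ (X.card = i0 ∨ Z.card = i0) := by
  have hX0 := Finset.card_pos_of_not_subset hXY
  have hZP := Finset.card_lt_univ_of_not_subset hYZ
  have hYi0 : Y.card = i0 := by
    by_contra hne
    exact rho_card_ne_two_of_not_subset hX hY hZ hXY hYZ hXZ hXY' hYZ' (h2 _ (by omega) (by omega) hne)
  refine ⟨hYi0, ?_⟩
  by_contra! hne
  exact false_of_rho_eq_two_of_rho_add_two_eq_two (k := i0 - 1)
    (h2 _ (by omega) (by omega) (by omega)) (h2 _ (by omega) (by omega) (by omega))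
    hX hY hZ (by omega) (by omega) (by omega) hXY hYZ hXZ

theorem card_eq_or_card_eq_of_incompRel {i0 : ℕ}
    (h2 : ∀ i, 1 ≤ i → i ≤ Fintype.card P - 1 → i ≠ i0 → rho P i = 2) {X Y Z : Finset P}
    (hX : IsLowerSet (X : Set P)) (hY : IsLowerSet (Y : Set P)) (hZ : IsLowerSet (Z : Set P))
    (hXY : IncompRel (· ⊆ ·) X Y) (hXZ : IncompRel (· ⊆ ·) X Z) (hYZ : IncompRel (· ⊆ ·) Y Z) :
    X.card = i0 ∨ Y.card = i0 := by
  wlog hle : X.card ≤ Y.card generalizing X Y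
  · exact (this hY hX hXY.symm hYZ hXZ (by omega)).symm
  rcases le_total Z.card X.card with hZX | hXZ'
  · exact Or.inl (card_eq_of_card_le_of_card_le h2 hZ hX hY hXZ.2 hXY.1 hYZ.2 hZX hle).1
  rcases le_total Z.card Y.card with hZY | hYZ'
  · exact (card_eq_of_card_le_of_card_le h2 hX hZ hY hXZ.1 hYZ.2 hXY.1 hXZ' hZY).2
  · exact Or.inr (card_eq_of_card_le_of_card_le h2 hX hY hZ hXY.1 hYZ.1 hXZ.1 hle hYZ').1

end Rank

section LowerClosure

variable {P : Type*} [PartialOrder P] [Fintype P]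

open Classical in
noncomputable def Finset.lowerClosure (s : Finset P) : Finset P :=
  Finset.univ.filter fun x => ∃ y ∈ s, x ≤ y

theorem Finset.mem_lowerClosure {s : Finset P} {x : P} : x ∈ s.lowerClosure ↔ ∃ y ∈ s, x ≤ y := by
  simp [Finset.lowerClosure]

theorem Finset.isLowerSet_lowerClosure (s : Finset P) : IsLowerSet (s.lowerClosure : Set P) :=
  fun _ _ hba ha => by
    obtain ⟨y, hy, hay⟩ := Finset.mem_lowerClosure.1 ha
    exact Finset.mem_lowerClosure.2 ⟨y, hy, hba.trans hay⟩

theorem Finset.lowerClosure_subset_lowerClosure_iff {s t : Finset P} :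
    s.lowerClosure ⊆ t.lowerClosure ↔ ∀ x ∈ s, ∃ y ∈ t, x ≤ y := by
  refine ⟨fun h x hx => Finset.mem_lowerClosure.1 (h (Finset.mem_lowerClosure.2 ⟨x, hx, le_rfl⟩)),
    fun h z hz => ?_⟩
  obtain ⟨x, hx, hzx⟩ := Finset.mem_lowerClosure.1 hz
  obtain ⟨y, hy, hxy⟩ := h x hx
  exact Finset.mem_lowerClosure.2 ⟨y, hy, hzx.trans hxy⟩

theorem Finset.lowerClosure_map_subset_lowerClosure_map_iff {Q : Type*} [Preorder Q]
    (e : Q ↪o P) {s t : Finset Q} :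
    (s.map e.toEmbedding).lowerClosure ⊆ (t.map e.toEmbedding).lowerClosure ↔
      ∀ x ∈ s, ∃ y ∈ t, x ≤ y := by
  simp only [Finset.lowerClosure_subset_lowerClosure_iff, Finset.mem_map,
    RelEmbedding.coe_toEmbedding, forall_exists_index, and_imp, forall_apply_eq_imp_iff₂,
    exists_exists_and_eq_and, e.le_iff_le]

end LowerClosure

def OrderEmbedding.sumElim {α β P : Type*} [PartialOrder α] [PartialOrder β] [PartialOrder P]
    (f : α ↪o P) (g : β ↪o P) (hfg : ∀ a b, IncompRel (· ≤ ·) (f a) (g b)) : α ⊕ β ↪o P :=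
  OrderEmbedding.ofMapLEIff (Sum.elim f g) <| by
    rintro (a | b) (a' | b')
    · simp
    · simpa using (hfg a b').1
    · simpa using (hfg a' b).2
    · simp

theorem false_of_orderEmbedding_sum_fin_three {P : Type*} [PartialOrder P] [Fintype P]
    [DecidableEq P] {i0 : ℕ}
    (h2 : ∀ i, 1 ≤ i → i ≤ Fintype.card P - 1 → i ≠ i0 → rho P i = 2)
    (e : Fin 3 ⊕ Fin 3 ↪o P) : False := by
  let I (s : Finset (Fin 3 ⊕ Fin 3)) : Finset P := (s.map e.toEmbedding).lowerClosure
  have hI (s) : IsLowerSet (I s : Set P) := Finset.isLowerSet_lowerClosure _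
  have hsub (s t) : I s ⊆ I t ↔ ∀ x ∈ s, ∃ y ∈ t, x ≤ y :=
    Finset.lowerClosure_map_subset_lowerClosure_map_iff e
  have hinc (s t) : IncompRel (· ⊆ ·) (I s) (I t) ↔
      ¬ (∀ x ∈ s, ∃ y ∈ t, x ≤ y) ∧ ¬ (∀ x ∈ t, ∃ y ∈ s, x ≤ y) := by
    rw [IncompRel, hsub, hsub]
  have hlt (s t) (hst : ∀ x ∈ s, ∃ y ∈ t, x ≤ y) (hts : ¬ ∀ x ∈ t, ∃ y ∈ s, x ≤ y) :
      (I s).card < (I t).card :=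
    Finset.card_lt_card (Finset.ssubset_iff_subset_ne.2
      ⟨(hsub s t).2 hst, fun h => hts ((hsub t s).1 h.ge)⟩)
  -- `a₀, a₁, a₂` is `inl 0, inl 1, inl 2` and `a₃, a₄, a₅` is `inr 0, inr 1, inr 2`.
  let E₀ : Finset (Fin 3 ⊕ Fin 3) := {.inl 1}
  let E₁ : Finset (Fin 3 ⊕ Fin 3) := {.inl 0, .inr 0}
  let E₂ : Finset (Fin 3 ⊕ Fin 3) := {.inr 1}
  let F₀ : Finset (Fin 3 ⊕ Fin 3) := {.inl 2, .inr 0}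
  let F₁ : Finset (Fin 3 ⊕ Fin 3) := {.inl 1, .inr 1}
  let F₂ : Finset (Fin 3 ⊕ Fin 3) := {.inl 0, .inr 2}
  have hE := card_eq_or_card_eq_of_incompRel h2 (hI E₀) (hI E₁) (hI E₂)
    ((hinc _ _).2 (by simp [E₀, E₁])) ((hinc _ _).2 (by simp [E₀, E₂]))
    ((hinc _ _).2 (by simp [E₁, E₂]))
  have hF := card_eq_or_card_eq_of_incompRel h2 (hI F₀) (hI F₁) (hI F₂)
    ((hinc _ _).2 (by simp [F₀, F₁])) ((hinc _ _).2 (by simp [F₀, F₂]))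
    ((hinc _ _).2 (by simp [F₁, F₂]))
  have h00 := hlt E₀ F₀ (by simp [E₀, F₀]) (by simp [E₀, F₀])
  have h01 := hlt E₀ F₁ (by simp [E₀, F₁]) (by simp [E₀, F₁])
  have h10 := hlt E₁ F₀ (by simp [E₁, F₀]) (by simp [E₁, F₀])
  have h11 := hlt E₁ F₁ (by simp [E₁, F₁]) (by simp [E₁, F₁])
  omega

theorem stmt_15_general {P : Type*} [PartialOrder P] [Fintype P] [DecidableEq P]
    (i0 : ℕ)
    (h2 : ∀ i, 1 ≤ i → i ≤ Fintype.card P - 1 → i ≠ i0 → rho P i = 2)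
    (a : Fin 6 → P)
    (hchain1 : a 0 < a 1 ∧ a 1 < a 2) (hchain2 : a 3 < a 4 ∧ a 4 < a 5)
    (hincomp : ∀ i j : Fin 6, i ≤ 2 → 3 ≤ j → ¬ a i ≤ a j ∧ ¬ a j ≤ a i) :
    (3 ≤ rho P (i0 - 1) ∨ 3 ≤ rho P (i0 + 1)) ∧ False := by
  have hmono₁ : StrictMono fun i : Fin 3 => a (Fin.castAdd 3 i) :=
    Fin.strictMono_iff_lt_succ.2 fun i => by fin_cases i; exacts [hchain1.1, hchain1.2]
  have hmono₂ : StrictMono fun i : Fin 3 => a (Fin.natAdd 3 i) :=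
    Fin.strictMono_iff_lt_succ.2 fun i => by fin_cases i; exacts [hchain2.1, hchain2.2]
  have hincomp' (i j : Fin 3) : IncompRel (· ≤ ·) (a (Fin.castAdd 3 i)) (a (Fin.natAdd 3 j)) :=
    hincomp _ _ (by fin_cases i <;> decide) (by fin_cases j <;> decide)
  exact (false_of_orderEmbedding_sum_fin_three h2 <| OrderEmbedding.sumElim
    (OrderEmbedding.ofStrictMono _ hmono₁) (OrderEmbedding.ofStrictMono _ hmono₂) hincomp').elim

/-- Suppose `L = J(P)` is simple, some rank `i0` has `ρ_L(i0) ≥ 4` while all other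
middle ranks have `ρ_L(i) = 2`, and `P` contains a subposet isomorphic to the
disjoint union of two 3-element chains.  Then `ρ_L(i0−1) ≥ 3` or `ρ_L(i0+1) ≥ 3`,
a contradiction: no such `L` exists. -/
theorem stmt_15 {P : Type*} [PartialOrder P] [Fintype P] [DecidableEq P]
    (hd : 2 ≤ Fintype.card P)
    (hsimple : ∀ i, 1 ≤ i → i ≤ Fintype.card P - 1 → 2 ≤ rho P i)
    (i0 : ℕ) (hi0l : 1 ≤ i0) (hi0r : i0 ≤ Fintype.card P - 1)
    (h4 : 4 ≤ rho P i0)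
    (h2 : ∀ i, 1 ≤ i → i ≤ Fintype.card P - 1 → i ≠ i0 → rho P i = 2)
    (a : Fin 6 → P) (hinj : Function.Injective a)
    (hchain1 : a 0 < a 1 ∧ a 1 < a 2) (hchain2 : a 3 < a 4 ∧ a 4 < a 5)
    (hincomp : ∀ i j : Fin 6, i ≤ 2 → 3 ≤ j → ¬ a i ≤ a j ∧ ¬ a j ≤ a i) :
    (3 ≤ rho P (i0 - 1) ∨ 3 ≤ rho P (i0 + 1)) ∧ False :=
  stmt_15_general i0 h2 a hchain1 hchain2 hincomp
end
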